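/- arXiv:0902.4190 — 3 statements merged into one kernel-verified Lean document; each statement's English description precedes it below -/
import Mathlib

section
/- Let p be an odd prime and n an integer not divisible by p. Then |𝔰(p,n) − (−n/p) · p²/(p−1)³| ≤ 7p/(p−1)³, where (−n/p) denotes the Legendre symbol of −n modulo p. -/
/-!
Let `χ` be the Legendre symbol mod `p`, `ψ = e_p` and `g = ∑ χ(x) ψ(x)` its Gauss sum, so that
`g² = χ(-1) p`. Counting square roots, `∑_x ψ(a x²) = ∑_y (1 + χ(y)) ψ(a y) = χ(a) g`, hence
`S_p(a) = χ(a) g - 1` for `p ∤ a`. As `χ(a)² = 1` there, `(χ(a) g - 1)³` is linear in `χ(a)`, and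
summing it against `ψ(-n a)` over `a ≠ 0` gives
`χ(-n) g⁴ + 3 χ(-n) g² + 3 g² + 1 = χ(-n) p² + 3 χ(-n) χ(-1) p + 3 χ(-1) p + 1`.
Dividing by `φ(p)³ = (p - 1)³`, the first term is the main term and the rest has norm `≤ 6p + 1`.
-/

/-- `e_q(x) = exp(2πix/q)` evaluated at the integer `x = a·h²`, summed over a reduced
residue system: `S_q(a) = ∑_{1 ≤ h ≤ q, gcd(h,q)=1} e_q(a h²)`. -/
noncomputable def Sq (q : ℕ) (a : ℤ) : ℂ :=
  ∑ h ∈ (Finset.Icc 1 q).filter (fun h => Nat.gcd h q = 1),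
    Complex.exp (2 * (Real.pi : ℂ) * Complex.I * ((a : ℂ) * (h : ℂ) ^ 2) / (q : ℂ))

/-- The singular series coefficient
`𝔰(q,n) = φ(q)⁻³ ∑_{1 ≤ a ≤ q, gcd(a,q)=1} S_q(a)³ e_q(−an)`. -/
noncomputable def sfrak (q : ℕ) (n : ℤ) : ℂ :=
  ((q.totient : ℂ)) ⁻¹ ^ 3 *
    ∑ a ∈ (Finset.Icc 1 q).filter (fun a => Nat.gcd a q = 1),
      (Sq q a) ^ 3 *
        Complex.exp (-(2 * (Real.pi : ℂ) * Complex.I * ((a : ℂ) * (n : ℂ)) / (q : ℂ)))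

open Finset

section QuadraticGaussSum

variable {F : Type*} [Field F] [Fintype F] [DecidableEq F]
  {R : Type*} [CommRing R] {ψ : AddChar F R}

local notation "χ" => MulChar.ringHomComp (quadraticChar F) (Int.castRingHom R)

lemma quadraticChar_ringHomComp_sq {b : F} (hb : b ≠ 0) : χ b ^ 2 = 1 := by
  rw [MulChar.ringHomComp_apply, ← map_pow, quadraticChar_sq_one hb, map_one]

lemma sum_quadraticChar_mul_addChar_mul {b : F} (hb : b ≠ 0) :
    ∑ x, χ x * ψ (b * x) = χ b * gaussSum χ ψ := by
  have hinv : χ⁻¹ = χ := ((quadraticChar_isQuadratic F).comp _).inv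
  simpa [gaussSum, AddChar.mulShift_apply, hinv] using
    gaussSum_mulShift_eq χ ψ (Units.mk0 b hb)

lemma sum_addChar_mul_eq_zero [IsDomain R] (hψ : ψ.IsPrimitive) {b : F} (hb : b ≠ 0) :
    ∑ x, ψ (b * x) = 0 := by
  simpa [hb, mul_comm] using AddChar.sum_mulShift b hψ

lemma card_sqrts_eq_quadraticChar_add_one (hF : ringChar F ≠ 2) (y : F) :
    (#{x | x ^ 2 = y} : R) = χ y + 1 := by
  simpa [MulChar.ringHomComp_apply, Set.toFinset_ofPred] using
    congrArg (Int.cast : ℤ → R) (quadraticChar_card_sqrts hF y)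

lemma sum_addChar_mul_sq [IsDomain R] (hF : ringChar F ≠ 2) (hψ : ψ.IsPrimitive) {b : F}
    (hb : b ≠ 0) : ∑ x, ψ (b * x ^ 2) = χ b * gaussSum χ ψ := by
  calc ∑ x, ψ (b * x ^ 2)
      = ∑ y, ∑ x with x ^ 2 = y, ψ (b * x ^ 2) := (sum_fiberwise _ _ _).symm
    _ = ∑ y, (χ y + 1) * ψ (b * y) := by
        refine sum_congr rfl fun y _ => ?_
        rw [sum_congr rfl fun x hx => by rw [(mem_filter.mp hx).2], sum_const, nsmul_eq_mul,
          card_sqrts_eq_quadraticChar_add_one hF]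
    _ = χ b * gaussSum χ ψ := by
        simp only [add_mul, one_mul, sum_add_distrib, sum_quadraticChar_mul_addChar_mul hb,
          sum_addChar_mul_eq_zero hψ hb, add_zero]

lemma gaussSum_quadraticChar_ringHomComp_sq [IsDomain R] [CharZero R] (hF : ringChar F ≠ 2)
    (hψ : ψ.IsPrimitive) : gaussSum χ ψ ^ 2 = χ (-1) * Fintype.card F :=
  gaussSum_sq ((MulChar.ringHomComp_ne_one_iff Int.cast_injective).mpr (quadraticChar_ne_one hF))
    ((quadraticChar_isQuadratic F).comp _) hψ

lemma sum_erase_zero_addChar_mul_sq [IsDomain R] (hF : ringChar F ≠ 2) (hψ : ψ.IsPrimitive)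
    {b : F} (hb : b ≠ 0) : ∑ x ∈ univ.erase 0, ψ (b * x ^ 2) = χ b * gaussSum χ ψ - 1 := by
  rw [sum_erase_eq_sub (mem_univ 0), sum_addChar_mul_sq hF hψ hb]
  simp

lemma sum_erase_zero_cube_mul_addChar [IsDomain R] [CharZero R] (hF : ringChar F ≠ 2)
    (hψ : ψ.IsPrimitive) {c : F} (hc : c ≠ 0) :
    ∑ b ∈ univ.erase 0, (χ b * gaussSum χ ψ - 1) ^ 3 * ψ (c * b)
      = χ c * Fintype.card F ^ 2 + 3 * χ c * χ (-1) * Fintype.card F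
        + 3 * χ (-1) * Fintype.card F + 1 := by
  set g := gaussSum χ ψ
  have hcube : ∀ b ∈ univ.erase (0 : F), (χ b * g - 1) ^ 3 * ψ (c * b)
      = (g ^ 3 + 3 * g) * (χ b * ψ (c * b)) - (3 * g ^ 2 + 1) * ψ (c * b) := fun b hb => by
    linear_combination (χ b * g ^ 3 - 3 * g ^ 2) * ψ (c * b) *
      quadraticChar_ringHomComp_sq (R := R) (ne_of_mem_erase hb)
  have hχψ : ∑ b ∈ univ.erase 0, χ b * ψ (c * b) = χ c * g := by
    rw [sum_erase_eq_sub (mem_univ 0), sum_quadraticChar_mul_addChar_mul hc]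
    simp [g]
  have hψ0 : ∑ b ∈ univ.erase 0, ψ (c * b) = -1 := by
    rw [sum_erase_eq_sub (mem_univ 0), sum_addChar_mul_eq_zero hψ hc]
    simp
  have hg2 := gaussSum_quadraticChar_ringHomComp_sq hF hψ
  have hχ2 := quadraticChar_ringHomComp_sq (R := R) (neg_ne_zero.mpr (one_ne_zero' F))
  rw [sum_congr rfl hcube, sum_sub_distrib, ← mul_sum, ← mul_sum, hχψ, hψ0]
  linear_combination (χ c * g ^ 2 + χ c * χ (-1) * Fintype.card F + 3 * χ c + 3) * hg2
    + χ c * Fintype.card F ^ 2 * hχ2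

end QuadraticGaussSum

section PrimeModulus

open ZMod

variable {p : ℕ} [Fact p.Prime]

local notation "χ" => MulChar.ringHomComp (quadraticChar (ZMod p)) (Int.castRingHom ℂ)

lemma sum_filter_coprime_Icc_eq_sum_erase_zero {M : Type*} [AddCommMonoid M]
    (f : ZMod p → M) :
    ∑ h ∈ (Icc 1 p).filter (fun h => Nat.gcd h p = 1), f h = ∑ x ∈ univ.erase 0, f x := by
  have hp : p.Prime := Fact.out
  have hcop : ∀ h : ℕ, Nat.gcd h p = 1 ↔ ¬ p ∣ h := fun h =>
    Nat.coprime_comm.trans hp.coprime_iff_not_dvd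
  refine sum_nbij' (fun h => (h : ZMod p)) (fun x => x.val) ?_ ?_ ?_ ?_ (fun _ _ => rfl)
  · intro h hh
    simp_all [natCast_eq_zero_iff]
  · intro x hx
    have hx0 : x.val ≠ 0 := by simpa [ZMod.val_eq_zero] using ne_of_mem_erase hx
    simp only [mem_filter, mem_Icc, hcop]
    exact ⟨⟨Nat.one_le_iff_ne_zero.mpr hx0, (val_lt x).le⟩,
      fun hdvd => hx0 (Nat.eq_zero_of_dvd_of_lt hdvd (val_lt x))⟩
  · intro h hh
    simp only [mem_filter, mem_Icc, hcop] at hh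
    exact val_cast_of_lt (lt_of_le_of_ne hh.1.2 fun hhp => hh.2 (hhp ▸ dvd_rfl))
  · intro x _
    exact natCast_zmod_val x

lemma Sq_eq_sum_erase_zero (a : ℤ) :
    Sq p a = ∑ x ∈ univ.erase 0, stdAddChar ((a : ZMod p) * x ^ 2) := by
  rw [Sq, ← sum_filter_coprime_Icc_eq_sum_erase_zero]
  refine sum_congr rfl fun h _ => ?_
  rw [show (a : ZMod p) * (h : ZMod p) ^ 2 = ((a * h ^ 2 : ℤ) : ZMod p) by push_cast; rfl,
    stdAddChar_coe]
  push_cast; rfl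

lemma sfrak_eq_sum_erase_zero (n : ℤ) :
    sfrak p n = ((p : ℂ) - 1)⁻¹ ^ 3 * ∑ b ∈ univ.erase 0,
      (∑ x ∈ univ.erase 0, stdAddChar (b * x ^ 2)) ^ 3 * stdAddChar (-(n : ZMod p) * b) := by
  have hp : p.Prime := Fact.out
  rw [sfrak, Nat.totient_prime hp, Nat.cast_sub hp.one_le, Nat.cast_one,
    ← sum_filter_coprime_Icc_eq_sum_erase_zero]
  refine congrArg _ (sum_congr rfl fun a _ => ?_)
  rw [Sq_eq_sum_erase_zero, Int.cast_natCast,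
    show -(n : ZMod p) * a = ((-(a * n) : ℤ) : ZMod p) by push_cast; ring, stdAddChar_coe]
  push_cast; ring_nf

lemma sfrak_eq_of_intCast_ne_zero (hp2 : p ≠ 2) {n : ℤ} (hn : (n : ZMod p) ≠ 0) :
    sfrak p n = (χ (-n) * p ^ 2 + 3 * χ (-n) * χ (-1) * p + 3 * χ (-1) * p + 1)
      / ((p : ℂ) - 1) ^ 3 := by
  have hF : ringChar (ZMod p) ≠ 2 := by rwa [ZMod.ringChar_zmod_n]
  have hψ := isPrimitive_stdAddChar p
  rw [sfrak_eq_sum_erase_zero, sum_congr rfl fun b hb => by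
      rw [sum_erase_zero_addChar_mul_sq hF hψ (ne_of_mem_erase hb)],
    sum_erase_zero_cube_mul_addChar hF hψ (neg_ne_zero.mpr hn), ZMod.card, div_eq_inv_mul,
    inv_pow]

lemma quadraticChar_ringHomComp_intCast (a : ℤ) : χ (a : ZMod p) = jacobiSym a p := by
  rw [MulChar.ringHomComp_apply, ← jacobiSym.legendreSym.to_jacobiSym]
  rfl

end PrimeModulus

lemma norm_three_mul_mul_add_le {ε δ : ℂ} (hε : ‖ε‖ ≤ 1) (hδ : ‖δ‖ ≤ 1) {x : ℝ} (hx : 1 ≤ x) :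
    ‖3 * ε * δ * x + 3 * δ * x + 1‖ ≤ 7 * x := by
  have hεδ : ‖ε * δ‖ ≤ 1 := (norm_mul_le _ _).trans (mul_le_one₀ hε (norm_nonneg _) hδ)
  calc ‖3 * ε * δ * x + 3 * δ * x + 1‖ ≤ 3 * ‖ε * δ‖ * x + 3 * ‖δ‖ * x + 1 := by
        refine (norm_add₃_le ..).trans ?_
        simp only [mul_assoc, norm_mul, Complex.norm_ofNat, Complex.norm_real, norm_one,
          Real.norm_of_nonneg (by linarith : (0 : ℝ) ≤ x)]
        rfl
    _ ≤ 7 * x := by nlinarith [norm_nonneg δ, norm_nonneg (ε * δ)]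

/-- For an odd prime p and an integer n not divisible by p,
`|𝔰(p,n) − (−n/p)·p²/(p−1)³| ≤ 7p/(p−1)³`, where `(−n/p)` is the Legendre symbol
(given here by the Jacobi symbol, which coincides with it for prime modulus). -/
theorem sfrak_prime_main_term (p : ℕ) (hp : p.Prime) (hodd : Odd p) (n : ℤ)
    (hn : ¬ (p : ℤ) ∣ n) :
    ‖sfrak p n -
        (jacobiSym (-n) p : ℂ) * (p : ℂ) ^ 2 / ((p : ℂ) - 1) ^ 3‖
      ≤ 7 * (p : ℝ) / ((p : ℝ) - 1) ^ 3 := by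
  have : Fact p.Prime := ⟨hp⟩
  have hp2 : p ≠ 2 := by rintro rfl; norm_num at hodd
  have hn' : (n : ZMod p) ≠ 0 := by rwa [Ne, ZMod.intCast_zmod_eq_zero_iff_dvd]
  have hp1 : (1 : ℝ) ≤ p := by exact_mod_cast hp.one_le
  have hden : ‖(p : ℂ) - 1‖ = p - 1 := by
    rw [← Complex.ofReal_natCast, ← Complex.ofReal_one, ← Complex.ofReal_sub, Complex.norm_real,
      Real.norm_of_nonneg (by linarith)]
  rw [sfrak_eq_of_intCast_ne_zero hp2 hn', ← sub_div, norm_div, norm_pow, hden]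
  gcongr
  set χ := MulChar.ringHomComp (quadraticChar (ZMod p)) (Int.castRingHom ℂ)
  have hχn : χ (-n) = jacobiSym (-n) p := by
    rw [← Int.cast_neg]; exact quadraticChar_ringHomComp_intCast (-n)
  calc _ = ‖3 * χ (-n) * χ (-1) * p + 3 * χ (-1) * p + 1‖ := by rw [← hχn]; ring_nf
    _ ≤ 7 * p := norm_three_mul_mul_add_le (DirichletCharacter.norm_le_one χ _)
        (DirichletCharacter.norm_le_one χ _) hp1
end

section
/- Let α, β be real numbers with 0 < α < β, let ε > 0, let n and g be positive integers, let Q ≥ 1 be real, and let (A_q) be nonnegative real numbers indexed by the integers q with Q < q ≤ 2Q. Suppose there are B₁, B₂ ≥ 0 such that for every positive integer d, Σ_{Q < q ≤ 2Q, d | q} A_q ≤ B₁ + B₂/d. Then Σ_{Q < q ≤ 2Q} gcd(n, lcm(q,g))^α · lcm(q,g)^{−β} · A_q ≤ C · gcd(n,g)^α · g^{−β+ε} · (B₁ + Q^{−β'} B₂), where β' = min(β − α, 1) and the constant C depends only on α, β and ε. -/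
/-!
Sort the terms by `e = gcd(q, g)`, a divisor of `g`. Writing `q = m e`, one has
`lcm(q, g) = m g` and `gcd(n, m g) ≤ m gcd(n, g)`, so the weight of `q` is at most
`gcd(n, g)^α g^(-β) m^(α-β) ≤ gcd(n, g)^α g^(-β) (e / Q)^β'` because `m ≥ Q / e`. The hypothesis
for `d = e` then bounds the terms with `gcd(q, g) = e` by `gcd(n, g)^α g^(-β) (2 B₁ + Q^(-β') B₂)`,
and there are at most `τ(g) = O_ε(g^ε)` values of `e`.
-/

open Finset Real

lemma natCast_add_one_le_mul_pow {x : ℝ} (hx : 1 < x) (k : ℕ) :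
    (k : ℝ) + 1 ≤ (1 + (log x)⁻¹) * x ^ k := by
  have hlog : 0 < log x := log_pos hx
  have hexp : 1 + k * log x ≤ x ^ k := by
    rw [← rpow_natCast, rpow_def_of_pos (by linarith)]
    linarith [add_one_le_exp (log x * k)]
  have hexpand : (1 + (log x)⁻¹) * (1 + k * log x) = k + 1 + (k * log x + (log x)⁻¹) := by
    field_simp; ring
  calc (k : ℝ) + 1 ≤ (1 + (log x)⁻¹) * (1 + k * log x) := by
        rw [hexpand]; exact le_add_of_nonneg_right (by positivity)
    _ ≤ (1 + (log x)⁻¹) * x ^ k := by gcongr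

lemma natCast_add_one_le_mul_rpow_pow {ε p : ℝ} (hε : 0 < ε) (hp : 2 ≤ p) (k : ℕ) :
    (k : ℝ) + 1 ≤ (1 + (ε * log 2)⁻¹) * (p ^ k) ^ ε := by
  have h2 : (1 : ℝ) < 2 ^ ε := one_lt_rpow (by norm_num) hε
  calc (k : ℝ) + 1 ≤ (1 + (ε * log 2)⁻¹) * ((2 : ℝ) ^ ε) ^ k := by
        simpa [log_rpow two_pos] using natCast_add_one_le_mul_pow h2 k
    _ ≤ (1 + (ε * log 2)⁻¹) * (p ^ ε) ^ k := by gcongr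
    _ = (1 + (ε * log 2)⁻¹) * (p ^ k) ^ ε := by rw [rpow_pow_comm (by linarith)]

lemma natCast_add_one_le_rpow_pow {ε p : ℝ} (hε : 0 < ε) (hp : 2 ^ ε⁻¹ ≤ p) (k : ℕ) :
    (k : ℝ) + 1 ≤ (p ^ k) ^ ε := by
  have hp0 : 0 ≤ p := le_trans (by positivity) hp
  have hp2 : 2 ≤ p ^ ε := by
    calc (2 : ℝ) = (2 ^ ε⁻¹) ^ ε := by rw [← rpow_mul zero_le_two, inv_mul_cancel₀ hε.ne', rpow_one]
      _ ≤ p ^ ε := by gcongr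
  calc (k : ℝ) + 1 ≤ 2 ^ k := by exact_mod_cast Nat.lt_two_pow_self
    _ ≤ (p ^ ε) ^ k := by gcongr
    _ = (p ^ k) ^ ε := rpow_pow_comm hp0 ε k

lemma exists_card_divisors_le_mul_rpow {ε : ℝ} (hε : 0 < ε) :
    ∃ C : ℝ, 0 < C ∧ ∀ g : ℕ, g ≠ 0 → (#g.divisors : ℝ) ≤ C * (g : ℝ) ^ ε := by
  set M : ℝ := 1 + (ε * log 2)⁻¹
  have hM : 1 ≤ M := le_add_of_nonneg_right (by positivity)
  set N : ℕ := ⌈(2 : ℝ) ^ ε⁻¹⌉₊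
  refine ⟨M ^ N, by positivity, fun g hg => ?_⟩
  -- Only the primes below `2 ^ ε⁻¹`, fewer than `N` of them, cost a factor `M`.
  set c : ℕ → ℝ := fun p => if (p : ℝ) < 2 ^ ε⁻¹ then M else 1
  have hprime : ∀ p ∈ g.primeFactors,
      ((g.factorization p + 1 : ℕ) : ℝ) ≤ c p * ((p : ℝ) ^ g.factorization p) ^ ε := by
    intro p hp
    have hp2 : (2 : ℝ) ≤ p := by exact_mod_cast (Nat.prime_of_mem_primeFactors hp).two_le
    push_cast
    by_cases hsmall : (p : ℝ) < 2 ^ ε⁻¹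
    · simp only [c, if_pos hsmall]
      exact natCast_add_one_le_mul_rpow_pow hε hp2 _
    · simp only [c, if_neg hsmall, one_mul]
      exact natCast_add_one_le_rpow_pow hε (not_lt.1 hsmall) _
  have hc : ∏ p ∈ g.primeFactors, c p ≤ M ^ N := by
    rw [prod_ite, prod_const_one, mul_one, prod_const]
    refine pow_le_pow_right₀ hM ((card_le_card fun p hp => ?_).trans (card_range N).le)
    exact mem_range.2 (Nat.lt_ceil.2 (mem_filter.1 hp).2)
  have hg_eq : (g : ℝ) = ∏ p ∈ g.primeFactors, (p : ℝ) ^ g.factorization p := by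
    conv_lhs => rw [← Nat.prod_factorization_pow_eq_self hg]
    rw [Nat.prod_factorization_eq_prod_primeFactors]
    push_cast
    rfl
  calc (#g.divisors : ℝ) = ∏ p ∈ g.primeFactors, ((g.factorization p + 1 : ℕ) : ℝ) := by
        rw [Nat.card_divisors hg, Nat.cast_prod]
    _ ≤ ∏ p ∈ g.primeFactors, c p * ((p : ℝ) ^ g.factorization p) ^ ε :=
        prod_le_prod (fun _ _ => by positivity) hprime
    _ = (∏ p ∈ g.primeFactors, c p) * (g : ℝ) ^ ε := by
        rw [prod_mul_distrib, finsetProd_rpow _ _ (fun _ _ => by positivity), ← hg_eq]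
    _ ≤ M ^ N * (g : ℝ) ^ ε := by gcongr

lemma Nat.lcm_eq_div_gcd_mul (q g : ℕ) : q.lcm g = q / q.gcd g * g := by
  rw [Nat.lcm_eq_mul_div, Nat.div_mul_right_comm (Nat.gcd_dvd_left q g)]

lemma Nat.gcd_mul_le_mul_gcd {m g : ℕ} (n : ℕ) (hm : m ≠ 0) (hg : g ≠ 0) :
    n.gcd (m * g) ≤ m * n.gcd g := by
  refine Nat.le_of_dvd (Nat.mul_pos (Nat.pos_of_ne_zero hm) (Nat.gcd_pos_of_pos_right n
    (Nat.pos_of_ne_zero hg))) ?_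
  rw [← Nat.gcd_mul_left]
  exact Nat.dvd_gcd ((Nat.gcd_dvd_left _ _).trans (dvd_mul_left n m)) (Nat.gcd_dvd_right _ _)

lemma rpow_mul_mul_rpow_neg_le {G G₀ m g α β β' : ℝ} (hG : 0 ≤ G) (hGm : G ≤ m * G₀)
    (hm : 1 ≤ m) (hg : 0 ≤ g) (hα : 0 ≤ α) (hαβ : α + β' ≤ β) :
    G ^ α * (m * g) ^ (-β) ≤ G₀ ^ α * g ^ (-β) * m ^ (-β') := by
  have hG₀ : 0 ≤ G₀ := (mul_nonneg_iff_of_pos_left (by linarith)).1 (hG.trans hGm)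
  calc G ^ α * (m * g) ^ (-β) ≤ (m * G₀) ^ α * (m * g) ^ (-β) := by gcongr
    _ = G₀ ^ α * g ^ (-β) * m ^ (α - β) := by
        rw [mul_rpow (by linarith) hG₀, mul_rpow (by linarith) hg, rpow_sub (by linarith),
          rpow_neg (by linarith)]
        ring
    _ ≤ G₀ ^ α * g ^ (-β) * m ^ (-β') := by
        gcongr
        linarith

lemma gcd_lcm_rpow_le {n g q : ℕ} {α β β' Q : ℝ} (hg : g ≠ 0) (hQ : 0 < Q) (hq : Q ≤ q)
    (hα : 0 ≤ α) (hβ' : 0 ≤ β') (hαβ : α + β' ≤ β) :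
    (n.gcd (q.lcm g) : ℝ) ^ α * (q.lcm g : ℝ) ^ (-β) ≤
      (n.gcd g : ℝ) ^ α * (g : ℝ) ^ (-β) * ((q.gcd g : ℝ) / Q) ^ β' := by
  have hq0 : 0 < q := by exact_mod_cast hQ.trans_le hq
  have he : 0 < q.gcd g := Nat.gcd_pos_of_pos_left g hq0
  have hm : 0 < q / q.gcd g := Nat.div_pos (Nat.gcd_le_left g hq0) he
  have hmR : ((q / q.gcd g : ℕ) : ℝ) = q / q.gcd g :=
    Nat.cast_div (Nat.gcd_dvd_left q g) (by positivity)
  rw [Nat.lcm_eq_div_gcd_mul, Nat.cast_mul]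
  calc _ ≤ (n.gcd g : ℝ) ^ α * (g : ℝ) ^ (-β) * ((q / q.gcd g : ℕ) : ℝ) ^ (-β') :=
        rpow_mul_mul_rpow_neg_le (by positivity)
          (by exact_mod_cast Nat.gcd_mul_le_mul_gcd n hm.ne' hg) (by exact_mod_cast hm)
          (by positivity) hα hαβ
    _ ≤ _ := by
        gcongr
        rw [hmR, rpow_neg (by positivity), ← inv_rpow (by positivity), inv_div]
        gcongr

lemma div_rpow_mul_add_div_le {e Q β' B₁ B₂ : ℝ} (he : 1 ≤ e) (heQ : e ≤ 2 * Q)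
    (hβ' : 0 ≤ β') (hβ'1 : β' ≤ 1) (hB₁ : 0 ≤ B₁) (hB₂ : 0 ≤ B₂) :
    (e / Q) ^ β' * (B₁ + B₂ / e) ≤ 2 * B₁ + Q ^ (-β') * B₂ := by
  have hQ : 0 < Q := by linarith
  have h₁ : (e / Q) ^ β' ≤ 2 := calc
    (e / Q) ^ β' ≤ 2 ^ β' := by gcongr; rwa [div_le_iff₀ hQ]
    _ ≤ 2 ^ (1 : ℝ) := rpow_le_rpow_of_exponent_le one_le_two hβ'1
    _ = 2 := rpow_one 2
  have h₂ : (e / Q) ^ β' / e ≤ Q ^ (-β') := calc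
    (e / Q) ^ β' / e = e ^ (β' - 1) * Q ^ (-β') := by
        rw [div_rpow (by linarith) hQ.le, rpow_sub (by linarith), rpow_one, rpow_neg hQ.le]
        ring
    _ ≤ 1 * Q ^ (-β') := by
        gcongr
        exact rpow_le_one_of_one_le_of_nonpos he (by linarith)
    _ = Q ^ (-β') := one_mul _
  calc (e / Q) ^ β' * (B₁ + B₂ / e) = (e / Q) ^ β' * B₁ + (e / Q) ^ β' / e * B₂ := by ring
    _ ≤ 2 * B₁ + Q ^ (-β') * B₂ := by gcongr

lemma sum_gcd_lcm_rpow_mul_le {n g e : ℕ} {α β β' Q B₁ B₂ : ℝ} {A : ℕ → ℝ} {F : Finset ℕ}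
    (hg : g ≠ 0) (hQ : 0 < Q) (hα : 0 ≤ α) (hβ' : 0 ≤ β') (hβ'1 : β' ≤ 1) (hαβ : α + β' ≤ β)
    (hB₁ : 0 ≤ B₁) (hB₂ : 0 ≤ B₂) (hA : ∀ q ∈ F, 0 ≤ A q)
    (hF : ∀ q ∈ F, Q ≤ q ∧ (q : ℝ) ≤ 2 * Q ∧ q.gcd g = e)
    (hsum : ∑ q ∈ F, A q ≤ B₁ + B₂ / e) :
    ∑ q ∈ F, (n.gcd (q.lcm g) : ℝ) ^ α * (q.lcm g : ℝ) ^ (-β) * A q ≤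
      (n.gcd g : ℝ) ^ α * (g : ℝ) ^ (-β) * (2 * B₁ + Q ^ (-β') * B₂) := by
  rcases F.eq_empty_or_nonempty with rfl | ⟨q₀, hq₀⟩
  · rw [sum_empty]
    positivity
  obtain ⟨hq₀Q, hq₀2Q, rfl⟩ := hF q₀ hq₀
  have hq₀ : 0 < q₀ := by exact_mod_cast hQ.trans_le hq₀Q
  have he₁ : (1 : ℝ) ≤ q₀.gcd g := by exact_mod_cast Nat.gcd_pos_of_pos_left g hq₀
  have he₂ : (q₀.gcd g : ℝ) ≤ 2 * Q :=
    le_trans (by exact_mod_cast Nat.gcd_le_left g hq₀) hq₀2Q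
  calc _ ≤ ∑ q ∈ F, (n.gcd g : ℝ) ^ α * (g : ℝ) ^ (-β) * ((q₀.gcd g : ℝ) / Q) ^ β' * A q := by
        refine sum_le_sum fun q hq => ?_
        obtain ⟨hqQ, -, hqe⟩ := hF q hq
        rw [← hqe]
        exact mul_le_mul_of_nonneg_right (gcd_lcm_rpow_le hg hQ hqQ hα hβ' hαβ) (hA q hq)
    _ = (n.gcd g : ℝ) ^ α * (g : ℝ) ^ (-β) * (((q₀.gcd g : ℝ) / Q) ^ β' * ∑ q ∈ F, A q) := by
        rw [mul_sum, mul_sum]; simp only [mul_assoc]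
    _ ≤ (n.gcd g : ℝ) ^ α * (g : ℝ) ^ (-β) *
          (((q₀.gcd g : ℝ) / Q) ^ β' * (B₁ + B₂ / (q₀.gcd g : ℕ))) := by
        gcongr
    _ ≤ (n.gcd g : ℝ) ^ α * (g : ℝ) ^ (-β) * (2 * B₁ + Q ^ (-β') * B₂) := by
        gcongr
        exact div_rpow_mul_add_div_le he₁ he₂ hβ' hβ'1 hB₁ hB₂

/-- Given 0 < α < β and ε > 0, there is a constant C = C(α,β,ε) > 0 such that:
for all positive integers n, g, all real Q ≥ 1 and all nonnegative (A_q) with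
`∑_{Q < q ≤ 2Q, d ∣ q} A_q ≤ B₁ + B₂/d` for every positive integer d, one has
`∑_{Q < q ≤ 2Q} gcd(n, lcm(q,g))^α lcm(q,g)^{−β} A_q
  ≤ C gcd(n,g)^α g^{−β+ε} (B₁ + Q^{−β'} B₂)` with β' = min(β−α, 1). -/
theorem gcd_lcm_average_bound :
    ∀ α β ε : ℝ, 0 < α → α < β → 0 < ε →
      ∃ C : ℝ, 0 < C ∧ ∀ n g : ℕ, 0 < n → 0 < g → ∀ Q : ℝ, 1 ≤ Q →
        ∀ A : ℕ → ℝ, (∀ q, 0 ≤ A q) → ∀ B₁ B₂ : ℝ, 0 ≤ B₁ → 0 ≤ B₂ →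
        (∀ d : ℕ, 0 < d →
          ∑ q ∈ (Finset.Icc 1 ⌊2 * Q⌋₊).filter
              (fun q : ℕ => Q < (q : ℝ) ∧ (q : ℝ) ≤ 2 * Q ∧ d ∣ q), A q ≤ B₁ + B₂ / (d : ℝ)) →
        ∑ q ∈ (Finset.Icc 1 ⌊2 * Q⌋₊).filter (fun q : ℕ => Q < (q : ℝ) ∧ (q : ℝ) ≤ 2 * Q),
            ((Nat.gcd n (Nat.lcm q g) : ℝ)) ^ α * ((Nat.lcm q g : ℝ)) ^ (-β) * A q
          ≤ C * ((Nat.gcd n g : ℝ)) ^ α * (g : ℝ) ^ (-β + ε) *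
              (B₁ + Q ^ (-(min (β - α) 1)) * B₂) := by
  intro α β ε hα hαβ hε
  obtain ⟨C₀, hC₀, hτ⟩ := exists_card_divisors_le_mul_rpow hε
  refine ⟨2 * C₀, by positivity, fun n g _ hg Q hQ A hA B₁ B₂ hB₁ hB₂ hdiv => ?_⟩
  set β' := min (β - α) 1
  have hβ' : 0 ≤ β' := le_min (by linarith) zero_le_one
  have hαβ' : α + β' ≤ β := by linarith [min_le_left (β - α) 1]
  set s := (Icc 1 ⌊2 * Q⌋₊).filter (fun q : ℕ => Q < (q : ℝ) ∧ (q : ℝ) ≤ 2 * Q)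
  have hfiber : ∀ e ∈ g.divisors, ∑ q ∈ s with q.gcd g = e,
      (n.gcd (q.lcm g) : ℝ) ^ α * (q.lcm g : ℝ) ^ (-β) * A q ≤
        (n.gcd g : ℝ) ^ α * (g : ℝ) ^ (-β) * (2 * B₁ + Q ^ (-β') * B₂) := by
    intro e he
    have hsub : s.filter (fun q => q.gcd g = e) ⊆ (Icc 1 ⌊2 * Q⌋₊).filter
        (fun q : ℕ => Q < (q : ℝ) ∧ (q : ℝ) ≤ 2 * Q ∧ e ∣ q) := fun q hq => by
      simp only [s, mem_filter] at hq ⊢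
      exact ⟨hq.1.1, hq.1.2.1, hq.1.2.2, hq.2 ▸ Nat.gcd_dvd_left q g⟩
    refine sum_gcd_lcm_rpow_mul_le hg.ne' (by linarith) hα.le hβ' (min_le_right _ _) hαβ' hB₁ hB₂
      (fun q _ => hA q) (fun q hq => ?_)
      ((sum_le_sum_of_subset_of_nonneg hsub fun q _ _ => hA q).trans
        (hdiv e (Nat.pos_of_mem_divisors he)))
    simp only [s, mem_filter] at hq
    exact ⟨hq.1.2.1.le, hq.1.2.2, hq.2⟩
  have hB : 2 * B₁ + Q ^ (-β') * B₂ ≤ 2 * (B₁ + Q ^ (-β') * B₂) := by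
    linarith [show 0 ≤ Q ^ (-β') * B₂ by positivity]
  calc _ = ∑ e ∈ g.divisors, ∑ q ∈ s with q.gcd g = e,
        (n.gcd (q.lcm g) : ℝ) ^ α * (q.lcm g : ℝ) ^ (-β) * A q :=
        (sum_fiberwise_of_maps_to (fun q _ => Nat.mem_divisors.2
          ⟨Nat.gcd_dvd_right q g, hg.ne'⟩) _).symm
    _ ≤ #g.divisors * ((n.gcd g : ℝ) ^ α * (g : ℝ) ^ (-β) * (2 * B₁ + Q ^ (-β') * B₂)) := by
        simpa using sum_le_card_nsmul _ _ _ hfiber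
    _ ≤ C₀ * (g : ℝ) ^ ε * ((n.gcd g : ℝ) ^ α * (g : ℝ) ^ (-β) * (2 * (B₁ + Q ^ (-β') * B₂))) := by
        gcongr
        exact hτ g hg.ne'
    _ = _ := by rw [rpow_add (by positivity)]; ring
end

section
/- The double integral ∫_{1/4}^{3/10} ∫_{1/4}^{α} 1/(α β (1 − α − β)) dβ dα is strictly less than 0.037. -/
/-!
For fixed `α` the integrand is `α⁻¹ (1 - α)⁻¹ (β⁻¹ + (1 - α - β)⁻¹)`, which is convex in `β`; by
symmetry it is also convex in `α` for fixed `β`. A separately convex function lies below its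
bilinear interpolant on every rectangle. Cut `[1/4, 3/10]` into six strips `[x, y]` of width
`1/120` and bound the integrand on `{x ≤ α ≤ y, 1/4 ≤ β ≤ α}` by its bilinear interpolant on
`[x, y] × [1/4, y]`. The bound integrates exactly (midpoint rule in `β`, Simpson's rule in `α`),
and the six contributions add up to `0.036993… < 0.037`.
-/

open MeasureTheory Set

noncomputable def bilinInterp (f : ℝ → ℝ → ℝ) (x y c d α β : ℝ) : ℝ :=
  ((y - α) * ((d - β) * f x c + (β - c) * f x d) + (α - x) * ((d - β) * f y c + (β - c) * f y d))
    / ((y - x) * (d - c))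

noncomputable def simpson (g : ℝ → ℝ) (a b : ℝ) : ℝ :=
  (b - a) / 6 * (g a + 4 * g ((a + b) / 2) + g b)

theorem ConvexOn.mul_le_chord {s : Set ℝ} {f : ℝ → ℝ} (hf : ConvexOn ℝ s f) {x y z : ℝ}
    (hx : x ∈ s) (hz : z ∈ s) (hxy : x ≤ y) (hyz : y ≤ z) :
    (z - x) * f y ≤ (z - y) * f x + (y - x) * f z := by
  rcases hxy.eq_or_lt with rfl | hxy
  · simp
  rcases hyz.eq_or_lt with rfl | hyz
  · simp
  exact hf.secant_mono_aux1 hx hz hxy hyz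

section BilinearInterpolation

variable {f : ℝ → ℝ → ℝ} {x y c d : ℝ}

theorem le_bilinInterp (hconv_left : ∀ β ∈ Icc c d, ConvexOn ℝ (Icc x y) (f · β))
    (hconv_right : ∀ α ∈ Icc x y, ConvexOn ℝ (Icc c d) (f α)) (hxy : x < y) (hcd : c < d)
    {α β : ℝ} (hα : α ∈ Icc x y) (hβ : β ∈ Icc c d) :
    f α β ≤ bilinInterp f x y c d α β := by
  have hx : x ∈ Icc x y := left_mem_Icc.2 hxy.le
  have hy : y ∈ Icc x y := right_mem_Icc.2 hxy.le
  have hc : c ∈ Icc c d := left_mem_Icc.2 hcd.le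
  have hd : d ∈ Icc c d := right_mem_Icc.2 hcd.le
  have h_β := (hconv_right α hα).mul_le_chord hc hd hβ.1 hβ.2
  have h_c := (hconv_left c hc).mul_le_chord hx hy hα.1 hα.2
  have h_d := (hconv_left d hd).mul_le_chord hx hy hα.1 hα.2
  rw [bilinInterp, le_div_iff₀ (mul_pos (sub_pos.2 hxy) (sub_pos.2 hcd))]
  nlinarith [mul_le_mul_of_nonneg_left h_β (sub_nonneg.2 hxy.le),
    mul_le_mul_of_nonneg_left h_c (sub_nonneg.2 hβ.2),
    mul_le_mul_of_nonneg_left h_d (sub_nonneg.2 hβ.1)]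

-- `simp` cannot apply `integral_const_mul` to `fun t => r * t`, which is stored eta-reduced.
theorem integral_const_mul_id (r a b : ℝ) : ∫ t in a..b, r * t = r * ((b ^ 2 - a ^ 2) / 2) := by
  rw [intervalIntegral.integral_const_mul, integral_id]

theorem integral_bilinInterp_right (f : ℝ → ℝ → ℝ) (x y c d α : ℝ) :
    ∫ β in c..α, bilinInterp f x y c d α β = (α - c) * bilinInterp f x y c d α ((α + c) / 2) := by
  simp only [bilinInterp]
  ring_nf
  simp (disch := apply Continuous.intervalIntegrable; fun_prop) only [intervalIntegral.integral_add,
    intervalIntegral.integral_sub, intervalIntegral.integral_const_mul,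
    intervalIntegral.integral_mul_const, integral_const_mul_id, intervalIntegral.integral_const,
    smul_eq_mul, integral_id]
  ring

-- Simpson's rule is exact for the cubic `α ↦ (α - c) * bilinInterp f x y c d α ((α + c) / 2)`.
theorem integral_integral_bilinInterp (f : ℝ → ℝ → ℝ) (x y c d : ℝ) :
    ∫ α in x..y, ∫ β in c..α, bilinInterp f x y c d α β =
      simpson (fun α => (α - c) * bilinInterp f x y c d α ((α + c) / 2)) x y := by
  simp_rw [integral_bilinInterp_right]
  simp only [simpson, bilinInterp]
  ring_nf
  simp (disch := apply Continuous.intervalIntegrable; fun_prop) only [intervalIntegral.integral_add,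
    intervalIntegral.integral_sub, intervalIntegral.integral_const_mul,
    intervalIntegral.integral_mul_const, integral_pow, intervalIntegral.integral_const,
    smul_eq_mul, integral_id, intervalIntegral.integral_neg]
  ring

theorem integral_integral_le_bilinInterp
    (hconv_left : ∀ β ∈ Icc c d, ConvexOn ℝ (Icc x y) (f · β))
    (hconv_right : ∀ α ∈ Icc x y, ConvexOn ℝ (Icc c d) (f α))
    (hcx : c ≤ x) (hxy : x < y) (hyd : y ≤ d)
    (hf : ∀ α ∈ Icc x y, IntervalIntegrable (f α) volume c α)
    (hF : IntervalIntegrable (fun α => ∫ β in c..α, f α β) volume x y) :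
    ∫ α in x..y, ∫ β in c..α, f α β ≤ ∫ α in x..y, ∫ β in c..α, bilinInterp f x y c d α β := by
  have hcd : c < d := by linarith
  refine intervalIntegral.integral_mono_on hxy.le hF ?_ fun α hα => ?_
  · simp_rw [integral_bilinInterp_right]
    exact Continuous.intervalIntegrable (by unfold bilinInterp; fun_prop) _ _
  · refine intervalIntegral.integral_mono_on (hcx.trans hα.1) (hf α hα)
      (Continuous.intervalIntegrable (by unfold bilinInterp; fun_prop) _ _) fun β hβ =>
        le_bilinInterp hconv_left hconv_right hxy hcd hα ⟨hβ.1, hβ.2.trans (hα.2.trans hyd)⟩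

end BilinearInterpolation

noncomputable def integrand (α β : ℝ) : ℝ := 1 / (α * β * (1 - α - β))

theorem integrand_comm (α β : ℝ) : integrand α β = integrand β α := by
  unfold integrand; ring_nf

theorem convexOn_one_div_mul_sub (s : ℝ) : ConvexOn ℝ (Ioo 0 s) fun t => 1 / (t * (s - t)) := by
  have hinv : ConvexOn ℝ (Ioi 0) fun t : ℝ => t⁻¹ := (convexOn_zpow (-1)).congr fun t _ => by simp
  have hinv' : ConvexOn ℝ (Iio s) fun t : ℝ => (s - t)⁻¹ := by
    have h := hinv.comp_affineMap (AffineMap.const ℝ ℝ s - AffineMap.id ℝ ℝ)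
    have hpre : ⇑(AffineMap.const ℝ ℝ s - AffineMap.id ℝ ℝ) ⁻¹' Ioi 0 = Iio s := by
      ext t; simp
    rw [hpre] at h
    exact h.congr fun t _ => by simp
  rcases le_or_gt s 0 with hs | hs
  · rw [Ioo_eq_empty_of_le hs]
    exact ⟨convex_empty, by simp⟩
  refine (((hinv.subset Ioo_subset_Ioi_self (convex_Ioo 0 s)).add
    (hinv'.subset Ioo_subset_Iio_self (convex_Ioo 0 s))).smul (inv_nonneg.2 hs.le)).congr ?_
  rintro t ⟨ht, hts⟩
  have : s - t ≠ 0 := by linarith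
  simp only [Pi.add_apply, smul_eq_mul]
  field_simp
  ring

theorem convexOn_integrand {α : ℝ} (hα : 0 ≤ α) : ConvexOn ℝ (Ioo 0 (1 - α)) (integrand α) := by
  refine ((convexOn_one_div_mul_sub (1 - α)).smul (inv_nonneg.2 hα)).congr fun β _ => ?_
  simp only [integrand, smul_eq_mul, one_div, mul_assoc, mul_inv, sub_sub]

theorem integral_integral_integrand_le {x y c d : ℝ} (hc : 0 < c) (hcx : c ≤ x) (hxy : x < y)
    (hyd : y ≤ d) (hd : y + d < 1)
    (hF : IntervalIntegrable (fun α => ∫ β in c..α, integrand α β) volume x y) :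
    ∫ α in x..y, ∫ β in c..α, integrand α β ≤
      ∫ α in x..y, ∫ β in c..α, bilinInterp integrand x y c d α β := by
  have hconv : ∀ {α a b : ℝ}, 0 ≤ α → 0 < a → b < 1 - α → ConvexOn ℝ (Icc a b) (integrand α) :=
    fun hα ha hb => (convexOn_integrand hα).subset (Icc_subset_Ioo ha hb) (convex_Icc _ _)
  refine integral_integral_le_bilinInterp (fun β hβ => ?_) (fun α hα => ?_) hcx hxy hyd
    (fun α hα => ?_) hF
  · simp_rw [integrand_comm _ β]
    exact hconv (by linarith [hβ.1]) (by linarith) (by linarith [hβ.2])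
  · exact hconv (by linarith [hα.1]) hc (by linarith [hα.2])
  · have hcont := (convexOn_integrand (α := α) (by linarith [hα.1])).continuousOn isOpen_Ioo
    refine ContinuousOn.intervalIntegrable (hcont.mono ?_)
    rw [uIcc_of_le (hcx.trans hα.1)]
    exact Icc_subset_Ioo hc (by linarith [hα.2])

/-- `∫_{1/4}^{3/10} ∫_{1/4}^{α} dβ dα / (αβ(1−α−β)) < 0.037`. -/
theorem double_integral_lt :
    (∫ α in (1 / 4 : ℝ)..(3 / 10 : ℝ), ∫ β in (1 / 4 : ℝ)..α,
        1 / (α * β * (1 - α - β))) < 0.037 := by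
  show ∫ α in (1 / 4 : ℝ)..(3 / 10), ∫ β in (1 / 4 : ℝ)..α, integrand α β < 0.037
  set F := fun α => ∫ β in (1 / 4 : ℝ)..α, integrand α β
  -- A non-integrable `F` would have integral `0`.
  by_cases hF : IntervalIntegrable F volume (1 / 4) (3 / 10)
  swap
  · rw [intervalIntegral.integral_undef hF]; norm_num
  set node : ℕ → ℝ := fun k => 1 / 4 + k / 120
  have hnode : ∀ k < 6, 1 / 4 ≤ node k ∧ node k < node (k + 1) ∧ node (k + 1) ≤ 3 / 10 := by
    intro k hk
    have : (k : ℝ) + 1 ≤ 6 := by exact_mod_cast hk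
    simp only [node]; push_cast
    refine ⟨?_, ?_, ?_⟩ <;> linarith [(Nat.cast_nonneg k : (0 : ℝ) ≤ k)]
  have hF_strip : ∀ k < 6, IntervalIntegrable F volume (node k) (node (k + 1)) := fun k hk =>
    hF.mono_set (by
      obtain ⟨h₁, h₂, h₃⟩ := hnode k hk
      rw [uIcc_of_le h₂.le, uIcc_of_le (by norm_num)]
      exact Icc_subset_Icc h₁ h₃)
  calc ∫ α in (1 / 4 : ℝ)..(3 / 10), F α
      = ∑ k ∈ Finset.range 6, ∫ α in node k..node (k + 1), F α := by
        rw [intervalIntegral.sum_integral_adjacent_intervals hF_strip]; norm_num [node]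
    _ ≤ ∑ k ∈ Finset.range 6, simpson (fun α => (α - 1 / 4) *
          bilinInterp integrand (node k) (node (k + 1)) (1 / 4) (node (k + 1)) α ((α + 1 / 4) / 2))
          (node k) (node (k + 1)) := by
        refine Finset.sum_le_sum fun k hk => ?_
        have hk := Finset.mem_range.1 hk
        obtain ⟨h₁, h₂, h₃⟩ := hnode k hk
        rw [← integral_integral_bilinInterp]
        exact integral_integral_integrand_le (by norm_num) h₁ h₂ le_rfl (by linarith)
          (hF_strip k hk)
    _ < 0.037 := by
        norm_num [Finset.sum_range_succ, simpson, bilinInterp, integrand, node]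
end
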